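/- Consistency of the momentum source correction for smooth data: let ρ, s be C² functions of x with ρ > 0, and let e(ρ,s) be a C² internal energy satisfying the Gibbs relation (∂e/∂ρ)_s = p/ρ², where p(ρ,s) is the pressure, continuous. Define ρ_L = ρ(x), ρ_R = ρ(x+Δx), s_L = s(x), s_R = s(x+Δx), s̄ = (s_L+s_R)/2, and ε(Δx) = -(2ρ_Lρ_R/(ρ_L+ρ_R))·( e(ρ_R, s̄) - e(ρ_L, s̄) + ((p(ρ_L,s_L)+p(ρ_R,s_R))/2)·(1/ρ_R - 1/ρ_L) ). Then ε(Δx)/Δx → 0 as Δx → 0 (indeed ε(Δx)/Δx = O(Δx)). -/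

import Mathlib

open Asymptotics Filter

private lemma bigO_id_of_contDiffAt {f : ℝ → ℝ} (h : ContDiffAt ℝ 1 f 0) :
    (fun t => f t - f 0) =O[nhds 0] (fun t : ℝ => t) := by
  obtain ⟨K, t, ht, hK⟩ := h.exists_lipschitzOnWith
  rw [Asymptotics.isBigO_iff]
  refine ⟨K, ?_⟩
  filter_upwards [ht] with y hy
  have h0 : (0:ℝ) ∈ t := mem_of_mem_nhds ht
  have := hK.dist_le_mul y hy 0 h0
  simpa [Real.dist_eq] using this

private lemma bigO_sq_of_hasDerivAt {f f' : ℝ → ℝ}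
    (hd : ∀ᶠ t in nhds (0:ℝ), HasDerivAt f (f' t) t)
    (h0 : f 0 = 0) (hO : f' =O[nhds 0] (fun t : ℝ => t)) :
    f =O[nhds 0] (fun t : ℝ => t ^ 2) := by
  rw [Asymptotics.isBigO_iff] at hO
  obtain ⟨C, hC⟩ := hO
  obtain ⟨r, hr, hball⟩ := Metric.eventually_nhds_iff_ball.mp (hd.and hC)
  rw [Asymptotics.isBigO_iff]
  refine ⟨max C 0, ?_⟩
  rw [Metric.eventually_nhds_iff_ball]
  refine ⟨r, hr, fun t ht => ?_⟩
  have hsub : segment ℝ 0 t ⊆ Metric.ball 0 r :=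
    (convex_ball (0:ℝ) r).segment_subset (Metric.mem_ball_self hr) ht
  have habs : ∀ y ∈ segment ℝ 0 t, |y| ≤ |t| := by
    intro y hy
    have : segment ℝ 0 t ⊆ Metric.closedBall 0 ‖t‖ := by
      apply (convex_closedBall (0:ℝ) ‖t‖).segment_subset <;> simp
    simpa [Real.dist_eq] using Metric.mem_closedBall.mp (this hy)
  have bound : ∀ y ∈ segment ℝ 0 t, ‖deriv f y‖ ≤ max C 0 * |t| := by
    intro y hy
    rw [((hball y (hsub hy)).1).deriv]
    calc ‖f' y‖ ≤ C * ‖y‖ := (hball y (hsub hy)).2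
    _ ≤ max C 0 * |y| := by
        apply mul_le_mul_of_nonneg_right (le_max_left _ _) (abs_nonneg _)
    _ ≤ max C 0 * |t| := by
        apply mul_le_mul_of_nonneg_left (habs y hy) (le_max_right _ _)
  have := Convex.norm_image_sub_le_of_norm_deriv_le
    (fun y hy => ((hball y (hsub hy)).1).differentiableAt) bound
    (convex_segment 0 t) (left_mem_segment ℝ 0 t) (right_mem_segment ℝ 0 t)
  rw [h0, sub_zero] at this
  calc ‖f t‖ ≤ max C 0 * |t| * ‖t - 0‖ := this
  _ = max C 0 * ‖t ^ 2‖ := by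
      simp [pow_two, abs_mul, Real.norm_eq_abs]
      rw [mul_assoc, ← pow_two, sq_abs, pow_two]

/-- Consistency of the momentum source correction for smooth data: with
`ρ`, `s` C² in `x`, `ρ > 0`, an internal energy `e(ρ,s)` which is C² and
satisfies the Gibbs relation `(∂e/∂ρ)ₛ = p/ρ²` for a continuous pressure
`p(ρ,s)`, the correction `ε(Δx)` satisfies `ε(Δx)/Δx → 0` as `Δx → 0`,
and indeed `ε(Δx)/Δx = O(Δx)`. -/
theorem momentum_source_correction_consistency
    (ρ s : ℝ → ℝ) (hρ : ContDiff ℝ 2 ρ) (hs : ContDiff ℝ 2 s)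
    (hρpos : ∀ x, 0 < ρ x)
    (e p : ℝ → ℝ → ℝ)
    (he : ContDiff ℝ 2 (fun q : ℝ × ℝ => e q.1 q.2))
    (hp : Continuous (fun q : ℝ × ℝ => p q.1 q.2))
    (hGibbs : ∀ r σ : ℝ, 0 < r → HasDerivAt (fun r' => e r' σ) (p r σ / r ^ 2) r)
    (x : ℝ) :
    let εf : ℝ → ℝ := fun Δx =>
      -(2 * ρ x * ρ (x + Δx) / (ρ x + ρ (x + Δx))) *
        (e (ρ (x + Δx)) ((s x + s (x + Δx)) / 2)
          - e (ρ x) ((s x + s (x + Δx)) / 2)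
          + (p (ρ x) (s x) + p (ρ (x + Δx)) (s (x + Δx))) / 2
            * (1 / ρ (x + Δx) - 1 / ρ x))
    Tendsto (fun Δx => εf Δx / Δx) (nhdsWithin 0 {(0 : ℝ)}ᶜ) (nhds 0) ∧
    (fun Δx => εf Δx / Δx) =O[nhds 0] (fun Δx : ℝ => Δx) := by
  intro εf
  -- basic abbreviations
  set E : ℝ × ℝ → ℝ := fun q => e q.1 q.2 with hEdef
  set g : ℝ × ℝ → ℝ := fun q => fderiv ℝ E q (1, 0) with hgdef
  have hg : ContDiff ℝ 1 g :=
    (he.fderiv_right (by norm_num)).clm_apply contDiff_const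
  have hEd : Differentiable ℝ E := he.differentiable (by norm_num)
  have hpg : ∀ r σ : ℝ, 0 < r → p r σ = r ^ 2 * g (r, σ) := by
    intro r σ hr
    have h2 : HasDerivAt (fun r' : ℝ => (r', σ)) ((1:ℝ), (0:ℝ)) r :=
      (hasDerivAt_id r).prodMk (hasDerivAt_const r σ)
    have h3 : HasDerivAt (fun r' => e r' σ) (g (r, σ)) r :=
      by have := (hEd (r, σ)).hasFDerivAt.comp_hasDerivAt r h2; exact this
    have h4 : p r σ / r ^ 2 = g (r, σ) := (hGibbs r σ hr).unique h3
    field_simp at h4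
    linarith [h4]
  have ha : (0:ℝ) < ρ x := hρpos x
  set a : ℝ := ρ x with hadef
  set b : ℝ := s x with hbdef
  set c : ℝ := p a b with hcdef
  set u : ℝ → ℝ := fun t => ρ (x + t) with hudef
  set v : ℝ → ℝ := fun t => s (x + t) with hvdef
  have hu2 : ContDiff ℝ 2 u := hρ.comp (contDiff_const.add contDiff_id)
  have hv2 : ContDiff ℝ 2 v := hs.comp (contDiff_const.add contDiff_id)
  have hu1 : ContDiff ℝ 1 u := hu2.of_le (by norm_num)
  have hv1 : ContDiff ℝ 1 v := hv2.of_le (by norm_num)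
  have hud : Differentiable ℝ u := hu1.differentiable one_ne_zero
  have hvd : Differentiable ℝ v := hv1.differentiable one_ne_zero
  have hu' : ContDiff ℝ 1 (deriv u) :=
    (contDiff_succ_iff_deriv.mp (show ContDiff ℝ (1+1) u by exact_mod_cast hu2)).2.2
  have hv' : ContDiff ℝ 1 (deriv v) :=
    (contDiff_succ_iff_deriv.mp (show ContDiff ℝ (1+1) v by exact_mod_cast hv2)).2.2
  have hupos : ∀ t, 0 < u t := fun t => hρpos (x + t)
  have hune : ∀ t, u t ≠ 0 := fun t => (hupos t).ne'
  have hu0 : u 0 = a := by rw [hudef, hadef]; simp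
  have hv0 : v 0 = b := by rw [hvdef, hbdef]; simp
  set m : ℝ → ℝ := fun t => (b + v t) / 2 with hmdef
  have hm1 : ContDiff ℝ 1 m := (contDiff_const.add hv1).div_const 2
  have hm0 : m 0 = b := by rw [hmdef]; simp [hv0]
  set H : ℝ → ℝ := fun t => (u t)⁻¹ - a⁻¹ with hHdef
  set G : ℝ → ℝ := fun t => (c + (u t) ^ 2 * g (u t, v t)) / 2 with hGdef
  set ψ : ℝ → ℝ := fun t => (E (u t, m t) - E (a, m t)) + c * ((u t)⁻¹ - a⁻¹) with hψdef
  set ψ' : ℝ → ℝ := fun t =>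
    (fderiv ℝ E (u t, m t)) (deriv u t, deriv v t / 2)
      - (fderiv ℝ E (a, m t)) (0, deriv v t / 2)
      + c * (-(deriv u t) / (u t) ^ 2) with hψ'def
  -- ψ has derivative ψ'
  have hψd : ∀ t : ℝ, HasDerivAt ψ (ψ' t) t := by
    intro t
    have hmt : HasDerivAt m (deriv v t / 2) t :=
      (((hvd t).hasDerivAt.const_add b).div_const 2)
    have h1 : HasDerivAt (fun t => E (u t, m t))
        ((fderiv ℝ E (u t, m t)) (deriv u t, deriv v t / 2)) t :=
      by have := (hEd (u t, m t)).hasFDerivAt.comp_hasDerivAt t (((hud t).hasDerivAt).prodMk hmt); exact this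
    have h2 : HasDerivAt (fun t => E (a, m t))
        ((fderiv ℝ E (a, m t)) (0, deriv v t / 2)) t :=
      by have := (hEd (a, m t)).hasFDerivAt.comp_hasDerivAt t ((hasDerivAt_const t a).prodMk hmt); exact this
    have h3 : HasDerivAt (fun t => (u t)⁻¹) (-(deriv u t) / (u t) ^ 2) t :=
      ((hud t).hasDerivAt).inv (hune t)
    exact (h1.sub h2).add ((h3.sub_const a⁻¹).const_mul c)
  have hca : c = a ^ 2 * g (a, b) := hpg a b ha
  have hψ0 : ψ 0 = 0 := by rw [hψdef]; simp [hu0, hm0]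
  have hψ'0 : ψ' 0 = 0 := by
    have hL : (fderiv ℝ E (a, b)) (deriv u 0, deriv v 0 / 2)
        - (fderiv ℝ E (a, b)) (0, deriv v 0 / 2) = deriv u 0 * g (a, b) := by
      rw [← map_sub]
      have h5 : ((deriv u 0, deriv v 0 / 2) - (0, deriv v 0 / 2) : ℝ × ℝ)
          = deriv u 0 • ((1:ℝ), (0:ℝ)) := by
        simp [Prod.ext_iff]
      rw [h5, map_smul, smul_eq_mul, hgdef]
    rw [hψ'def]
    simp only [hu0, hm0]
    rw [hL, hca]
    field_simp
    ring
  have hψ'C : ContDiff ℝ 1 ψ' := by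
    have hfdE : ContDiff ℝ 1 (fderiv ℝ E) := he.fderiv_right (by norm_num)
    have t1 : ContDiff ℝ 1 (fun t => (fderiv ℝ E (u t, m t)) (deriv u t, deriv v t / 2)) :=
      (hfdE.comp (hu1.prodMk hm1)).clm_apply (hu'.prodMk (hv'.div_const 2))
    have t2 : ContDiff ℝ 1 (fun t => (fderiv ℝ E (a, m t)) ((0:ℝ), deriv v t / 2)) :=
      (hfdE.comp (contDiff_const.prodMk hm1)).clm_apply (contDiff_const.prodMk (hv'.div_const 2))
    have t3 : ContDiff ℝ 1 (fun t => c * (-(deriv u t) / (u t) ^ 2)) :=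
      contDiff_const.mul ((hu'.neg).div (hu1.pow 2) (fun t => pow_ne_zero 2 (hune t)))
    exact (t1.sub t2).add t3
  have hψ'O : ψ' =O[nhds 0] (fun t : ℝ => t) := by
    simpa [hψ'0] using bigO_id_of_contDiffAt hψ'C.contDiffAt
  have hψO : ψ =O[nhds 0] (fun t : ℝ => t ^ 2) :=
    bigO_sq_of_hasDerivAt (Filter.Eventually.of_forall hψd) hψ0 hψ'O
  -- the C¹ factors
  have hG1 : ContDiff ℝ 1 G :=
    (contDiff_const.add ((hu1.pow 2).mul (hg.comp (hu1.prodMk hv1)))).div_const 2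
  have hG0 : G 0 = c := by rw [hGdef]; simp only [hu0, hv0]; rw [← hca]; ring
  have hGO : (fun t => G t - c) =O[nhds 0] (fun t : ℝ => t) := by
    simpa [hG0] using bigO_id_of_contDiffAt hG1.contDiffAt
  have hH1 : ContDiff ℝ 1 H := (hu1.inv hune).sub contDiff_const
  have hH0 : H 0 = 0 := by rw [hHdef]; simp [hu0]
  have hHO : H =O[nhds 0] (fun t : ℝ => t) := by
    simpa [hH0] using bigO_id_of_contDiffAt hH1.contDiffAt
  have hBO : (fun t => ψ t + (G t - c) * H t) =O[nhds 0] (fun t : ℝ => t ^ 2) := by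
    refine hψO.add ?_
    simpa [pow_two] using hGO.mul hHO
  -- the bounded prefactor
  have hk : ContinuousAt (fun t => -(2 * a * u t / (a + u t))) 0 := by
    have hcu : Continuous u := hu1.continuous
    have hne : a + u 0 ≠ 0 := by rw [hu0]; positivity
    exact ((continuousAt_const.mul hcu.continuousAt).div
      (continuousAt_const.add hcu.continuousAt) hne).neg
  have hkO : (fun t => -(2 * a * u t / (a + u t))) =O[nhds 0] (fun _ : ℝ => (1:ℝ)) :=
    hk.isBigO_one ℝ
  -- identify εf
  have hεf_eq : εf = fun t => (-(2 * a * u t / (a + u t))) * (ψ t + (G t - c) * H t) := by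
    funext t
    show -(2 * a * u t / (a + u t)) *
        (e (u t) ((b + v t) / 2) - e a ((b + v t) / 2)
          + (p a b + p (u t) (v t)) / 2 * (1 / u t - 1 / a))
      = -(2 * a * u t / (a + u t)) * (ψ t + (G t - c) * H t)
    rw [hpg (u t) (v t) (hupos t)]
    rw [hψdef, hGdef, hHdef, hEdef, hmdef, hcdef]
    simp only [one_div]
    ring
  have hεO : εf =O[nhds 0] (fun t : ℝ => t ^ 2) := by
    rw [hεf_eq]
    simpa using hkO.mul hBO
  have hdiv : (fun t => εf t / t) =O[nhds 0] (fun t : ℝ => t) := by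
    rw [Asymptotics.isBigO_iff] at hεO
    obtain ⟨C, hC⟩ := hεO
    rw [Asymptotics.isBigO_iff]
    refine ⟨C, ?_⟩
    filter_upwards [hC] with t ht
    rcases eq_or_ne t 0 with rfl | h
    · simp
    · rw [Real.norm_eq_abs, Real.norm_eq_abs, abs_div, div_le_iff₀ (abs_pos.mpr h)]
      calc |εf t| ≤ C * ‖t ^ 2‖ := ht
      _ = C * |t| * |t| := by rw [Real.norm_eq_abs, abs_pow]; ring
  exact ⟨(hdiv.trans_tendsto tendsto_id).mono_left nhdsWithin_le_nhds, hdiv⟩
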